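/- arXiv:1708.08195 — 3 statements merged into one kernel-verified Lean document; each statement's English description precedes it below -/
import Mathlib

section
/- The rational map σ : P^2 ⇢ P^2 given by (X : Y : Z) ↦ (XY : Y((ω - 1)X + ωY) : Z((ω - 1)X + ωY)), where ω is a primitive cube root of unity, is a birational transformation: it has order 3 as a birational map, i.e., σ∘σ∘σ is the identity on a dense open set. -/
/-!
Write `ℓ_c = (c - 1)X + cY` and `σ_c = (XY : Yℓ_c : Zℓ_c)`, so that the map of the theorem is `σ_ω`.
Substituting `σ_c` into `ℓ_d` gives `Y ℓ_{cd}`: the forms `ℓ_c` compose like the matrices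
`[[1, 0], [c - 1, c]]`, a homomorphic image of the multiplicative group. Hence `σ_d ∘ σ_c = Yℓ_c · σ_{cd}`,
and `σ_ω` composed three times is a polynomial multiple of `σ_{ω³} = σ_1 = Y · id`.
-/

open MvPolynomial

section

variable {R : Type*} [CommRing R]

noncomputable def sigmaForm (c : R) : MvPolynomial (Fin 3) R :=
  (C c - 1) * X 0 + C c * X 1

noncomputable def sigmaMap (c : R) : Fin 3 → MvPolynomial (Fin 3) R :=
  ![X 0 * X 1, X 1 * sigmaForm c, X 2 * sigmaForm c]

theorem sigmaMap_apply_zero (c : R) : sigmaMap c 0 = X 0 * X 1 := rfl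

theorem sigmaMap_apply_one (c : R) : sigmaMap c 1 = X 1 * sigmaForm c := rfl

theorem sigmaMap_apply_two (c : R) : sigmaMap c 2 = X 2 * sigmaForm c := rfl

theorem sigmaMap_one_apply (i : Fin 3) : sigmaMap (1 : R) i = X 1 * X i := by
  fin_cases i <;> simp [sigmaMap, sigmaForm, mul_comm]

theorem aeval_sigmaMap_sigmaForm (c d : R) :
    aeval (sigmaMap c) (sigmaForm d) = X 1 * sigmaForm (c * d) := by
  simp only [sigmaForm, map_add, map_mul, map_sub, map_one, aeval_C, aeval_X, algebraMap_eq,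
    sigmaMap_apply_zero, sigmaMap_apply_one]
  ring

theorem aeval_sigmaMap_sigmaMap (c d : R) (i : Fin 3) :
    aeval (sigmaMap c) (sigmaMap d i) = X 1 * sigmaForm c * sigmaMap (c * d) i := by
  fin_cases i <;>
    simp only [Fin.zero_eta, Fin.mk_one, Fin.reduceFinMk, sigmaMap_apply_zero, sigmaMap_apply_one,
      sigmaMap_apply_two, map_mul, aeval_X, aeval_sigmaMap_sigmaForm] <;>
    ring

theorem sigmaForm_ne_zero [Nontrivial R] {c : R} (hc : c ≠ 0) : sigmaForm c ≠ 0 := by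
  intro h
  have := congrArg (eval ![0, 1, 0]) h
  simp [sigmaForm] at this
  exact hc this

end

/-- The rational map σ : P² ⇢ P², (X:Y:Z) ↦ (XY : Y((ω-1)X+ωY) : Z((ω-1)X+ωY)),
with ω a primitive cube root of unity, satisfies σ∘σ∘σ = id as a birational map:
the components of the threefold composition equal a common nonzero polynomial
factor times (X, Y, Z). -/
theorem stmt_6 (ω : ℂ) (hω : IsPrimitiveRoot ω 3) :
    let σ : Fin 3 → MvPolynomial (Fin 3) ℂ :=
      ![X 0 * X 1,
        X 1 * ((C ω - 1) * X 0 + C ω * X 1),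
        X 2 * ((C ω - 1) * X 0 + C ω * X 1)]
    ∃ g : MvPolynomial (Fin 3) ℂ, g ≠ 0 ∧
      ∀ i : Fin 3, aeval σ (aeval σ (σ i)) = g * X i := by
  show ∃ g, g ≠ 0 ∧ ∀ i, aeval (sigmaMap ω) (aeval (sigmaMap ω) (sigmaMap ω i)) = g * X i
  have hω0 : ω ≠ 0 := hω.ne_zero (by norm_num)
  have hω3 : ω * (ω * ω) = 1 := by rw [← hω.pow_eq_one]; ring
  refine ⟨X 1 * sigmaForm ω * (X 1 * sigmaForm (ω * ω)) * (X 1 * sigmaForm ω) * X 1, ?_,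
    fun i => ?_⟩
  · have := sigmaForm_ne_zero hω0
    have := sigmaForm_ne_zero (mul_ne_zero hω0 hω0)
    have := X_ne_zero (R := ℂ) (1 : Fin 3)
    positivity
  · rw [aeval_sigmaMap_sigmaMap, map_mul, aeval_sigmaMap_sigmaMap, map_mul, aeval_X,
      sigmaMap_apply_one, aeval_sigmaMap_sigmaForm, hω3, sigmaMap_one_apply]
    ring
end

section
/- Let ω be a primitive cube root of unity. The birational transformation (X : Y : Z) ↦ (XY : Y((ω - 1)X + ωY) : Z((ω - 1)X + ωY)) of P^2 is conjugate, via the Cremona transformation (X : Y : Z) ↦ (-XY : Y(X + Z) : Z(X + Z)), to the linear transformation (X : Y : Z) ↦ (ω² X : Y : Z); i.e., the composition P⁻¹ ∘ σ ∘ P agrees with the linear map on a dense open set. -/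
/-!
The inverse of the Cremona map `P = (-XY : Y(X+Z) : Z(X+Z))` is
`(-XZ : Y(X+Y) : Z(X+Y))`, and both compositions `P⁻¹ ∘ P` and `P⁻¹ ∘ σ ∘ P` are checked
by expanding polynomials: they come out as `(X : Y : Z)` and `(ω³X : Y : Z)` times a common
factor, and `ω³ = 1` rewrites the latter as `(ω²X : Y : Z)` after pulling one `ω` into the
factor. The factors are nonzero because they do not vanish at `(0, 1, 1)`.
-/

open MvPolynomial

noncomputable section

namespace CremonaConjugation

variable (R : Type*) [CommRing R]

def cremona : Fin 3 → MvPolynomial (Fin 3) R :=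
  ![-(X 0 * X 1), X 1 * (X 0 + X 2), X 2 * (X 0 + X 2)]

def cremonaInv : Fin 3 → MvPolynomial (Fin 3) R :=
  ![-(X 0 * X 2), X 1 * (X 0 + X 1), X 2 * (X 0 + X 1)]

variable {R}

def sigma (ω : R) : Fin 3 → MvPolynomial (Fin 3) R :=
  ![X 0 * X 1,
    X 1 * ((C ω - 1) * X 0 + C ω * X 1),
    X 2 * ((C ω - 1) * X 0 + C ω * X 1)]

theorem aeval_cremona_cremonaInv (i : Fin 3) :
    aeval (cremona R) (cremonaInv R i) = X 1 * X 2 * (X 0 + X 2) * X i := by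
  fin_cases i <;> simp [cremona, cremonaInv] <;> ring

theorem aeval_cremona_sigma_cremonaInv {ω : R} (hω : ω ^ 3 = 1) (i : Fin 3) :
    aeval (cremona R) (aeval (sigma ω) (cremonaInv R i)) =
      C ω * (X 1 ^ 3 * X 2 * (X 0 + X 2) ^ 2 * (X 0 + C ω * X 2)) *
        ![C (ω ^ 2) * X 0, X 1, X 2] i := by
  have hCω : (C ω : MvPolynomial (Fin 3) R) ^ 3 = 1 := by rw [← C_pow, hω, C_1]
  fin_cases i <;> simp [cremona, cremonaInv, sigma]
  · linear_combination (-(X 0 * X 1 ^ 3 * X 2 * (X 0 + X 2) ^ 2 * (X 0 + C ω * X 2))) * hCω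
  all_goals ring

end CremonaConjugation

end

open CremonaConjugation in
/-- With ω a primitive cube root of unity, the birational transformation
σ : (X:Y:Z) ↦ (XY : Y((ω-1)X+ωY) : Z((ω-1)X+ωY)) is conjugate, via the
Cremona transformation P : (X:Y:Z) ↦ (-XY : Y(X+Z) : Z(X+Z)), to the linear
map (X:Y:Z) ↦ (ω²X : Y : Z): there is a rational inverse Pinv of P
(Pinv ∘ P = id up to a common nonzero factor) such that Pinv ∘ σ ∘ P equals
the linear map up to a common nonzero polynomial factor. -/
theorem stmt_8 (ω : ℂ) (hω : IsPrimitiveRoot ω 3) :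
    let σ : Fin 3 → MvPolynomial (Fin 3) ℂ :=
      ![X 0 * X 1,
        X 1 * ((C ω - 1) * X 0 + C ω * X 1),
        X 2 * ((C ω - 1) * X 0 + C ω * X 1)]
    let P : Fin 3 → MvPolynomial (Fin 3) ℂ :=
      ![-(X 0 * X 1), X 1 * (X 0 + X 2), X 2 * (X 0 + X 2)]
    let L : Fin 3 → MvPolynomial (Fin 3) ℂ := ![C (ω ^ 2) * X 0, X 1, X 2]
    ∃ Pinv : Fin 3 → MvPolynomial (Fin 3) ℂ,
      (∃ g : MvPolynomial (Fin 3) ℂ, g ≠ 0 ∧ ∀ i, aeval P (Pinv i) = g * X i) ∧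
      (∃ h : MvPolynomial (Fin 3) ℂ, h ≠ 0 ∧
        ∀ i, aeval P (aeval σ (Pinv i)) = h * L i) := by
  intro σ P L
  have hω0 : ω ≠ 0 := hω.ne_zero (by norm_num)
  refine ⟨cremonaInv ℂ, ⟨_, ?_, aeval_cremona_cremonaInv⟩,
    ⟨_, ?_, aeval_cremona_sigma_cremonaInv hω.pow_eq_one⟩⟩
  all_goals
    refine ne_of_apply_ne (eval ![0, 1, 1]) ?_
    simp [hω0]
end

section
/- Let ω be a primitive cube root of unity and let x, y satisfy (1 + y/x)^3 = y with x ≠ 0. Define x' = yx/((ω - 1)x + ωy) (assuming the denominator is nonzero). Then (1 + y/x')^3 = y; i.e., the substitution x ↦ yx/((ω-1)x + ωy) preserves the relation (x + y)^3 = x^3 y. -/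
/-! Since `y / x' = ((ω - 1) * x + ω * y) / x`, we get `1 + y / x' = ω * (1 + y / x)`, and the
relation `(1 + y / x) ^ 3 = y` survives because `ω ^ 3 = 1`. -/

theorem pow_three_eq_one_of_sq_add_self_add_one_eq_zero {R : Type*} [CommRing R] {ω : R}
    (hω : ω ^ 2 + ω + 1 = 0) : ω ^ 3 = 1 := by
  linear_combination (ω - 1) * hω

theorem add_pow_eq_pow_mul_one_add_div_pow {K : Type*} [Field K] {a : K} (ha : a ≠ 0)
    (b : K) (n : ℕ) : (a + b) ^ n = a ^ n * (1 + b / a) ^ n := by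
  rw [← mul_pow, mul_add, mul_one, mul_div_cancel₀ b ha]

theorem one_add_div_div_eq_mul_one_add_div {K : Type*} [Field K] {ω x y : K} (hx : x ≠ 0)
    (hy : y ≠ 0) : 1 + y / (y * x / ((ω - 1) * x + ω * y)) = ω * (1 + y / x) := by
  rw [div_div_eq_mul_div, mul_div_mul_left _ _ hy]
  field_simp
  ring

theorem stmt_12_general (K : Type*) [Field K] (ω x y : K)
    (hω : ω ^ 2 + ω + 1 = 0) (hx : x ≠ 0)
    (hd : (ω - 1) * x + ω * y ≠ 0)
    (h : (1 + y / x) ^ 3 = y) :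
    (1 + y / (y * x / ((ω - 1) * x + ω * y))) ^ 3 = y ∧
    (y * x / ((ω - 1) * x + ω * y) + y) ^ 3
      = (y * x / ((ω - 1) * x + ω * y)) ^ 3 * y := by
  have hy : y ≠ 0 := by
    rintro rfl
    simp at h
  have hx' : y * x / ((ω - 1) * x + ω * y) ≠ 0 := div_ne_zero (mul_ne_zero hy hx) hd
  have h' : (1 + y / (y * x / ((ω - 1) * x + ω * y))) ^ 3 = y := by
    rw [one_add_div_div_eq_mul_one_add_div hx hy, mul_pow,
      pow_three_eq_one_of_sq_add_self_add_one_eq_zero hω, one_mul, h]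
  exact ⟨h', by rw [add_pow_eq_pow_mul_one_add_div_pow hx', h']⟩

/-- In a field of characteristic 0 with ω a primitive cube root of unity
(ω² + ω + 1 = 0), if x ≠ 0, (ω-1)x + ωy ≠ 0 and (1 + y/x)³ = y, then
x' = yx/((ω-1)x + ωy) again satisfies (1 + y/x')³ = y; equivalently the
substitution preserves the relation (x+y)³ = x³y. -/
theorem stmt_12 (K : Type*) [Field K] [CharZero K] (ω x y : K)
    (hω : ω ^ 2 + ω + 1 = 0) (hx : x ≠ 0)
    (hd : (ω - 1) * x + ω * y ≠ 0)
    (h : (1 + y / x) ^ 3 = y) :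
    (1 + y / (y * x / ((ω - 1) * x + ω * y))) ^ 3 = y ∧
    (y * x / ((ω - 1) * x + ω * y) + y) ^ 3
      = (y * x / ((ω - 1) * x + ω * y)) ^ 3 * y :=
  stmt_12_general K ω x y hω hx hd h
end
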